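/- (Theorem 1.) Let M ≥ 2, N ≥ 1 be integers, K, P > 0 real numbers, 0 ≤ m ≤ M−1, and set α = KP/(N²(M−1)) and F̄ = √α·Q̄_m ∈ ℂ^{MN×(M−1)N}, where Q̄_m is the NM-point DFT matrix with the N columns indexed {m+nM : 0 ≤ n ≤ N−1} removed. Then: (i) for every 1 ≤ i ≤ M, Tr(S_i F̄ F̄^H S_i^T) = KP; and (ii) with μ = N(M−1+β)/(1+NMα)² > 0, where β = (2Nα(1+Nα) + N²α²(M−1))/(1+Nα)², one has −2N·Σ_{i=1}^{M} S̄_(i)^T (I_{(M−1)N} + S̄_(i) F̄ F̄^H S̄_(i)^T)^{−2} S̄_(i) F̄ + 2μ·Σ_{i=1}^{M} S_i^T S_i F̄ = 0. (These are the KKT conditions showing F̄ is a stationary point of the sum-MSE pilot design problem in the symmetric isotropic case with unit noise variance: the gradient of J_M = N·Σ_i Tr((I + S̄_(i) F̄ F̄^H S̄_(i)^T)^{−1}) plus the Lagrange term vanishes, all power constraints hold with equality, and all multipliers are positive.) -/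

import Mathlib

open Matrix Kronecker

/-- The matrix `I_{M,i} ∈ ℂ^{(M-1)×M}`: the identity matrix `I_M` with its `i`-th row
removed. -/
noncomputable def rowRemoved (M : ℕ) (i : Fin M) : Matrix (Fin (M - 1)) (Fin M) ℂ :=
  Matrix.of fun j k =>
    if (k : ℕ) = (if (j : ℕ) < (i : ℕ) then (j : ℕ) else (j : ℕ) + 1) then 1 else 0

/-- `S̄_(i) = I_{M,i} ⊗ I_N`. -/
noncomputable def sBar (M N : ℕ) (i : Fin M) :
    Matrix (Fin (M - 1) × Fin N) (Fin M × Fin N) ℂ :=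
  rowRemoved M i ⊗ₖ (1 : Matrix (Fin N) (Fin N) ℂ)

/-- `S_i = e_iᵀ ⊗ I_N ∈ ℂ^{N × MN}`, the selection matrix of user `i`. -/
noncomputable def sSel (M N : ℕ) (i : Fin M) : Matrix (Fin N) (Fin M × Fin N) ℂ :=
  Matrix.of fun b jc => if jc.1 = i ∧ jc.2 = b then 1 else 0

/-!
Removing the columns `m + nM` from the `NM`-point DFT matrix leaves
`Q̄ Q̄ᴴ = NM·I - N·(W ⊗ I_N)`, where `W = v vᴴ` with `v_j = e^{-2πijm/M}`, and `(W ⊗ I_N) Q̄ = 0`.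
Hence `F̄ F̄ᴴ = G ⊗ I_N` with `G = αNM·I - αN·W`, and (i) is `N·G_ii = αN²(M-1) = KP`.

Deleting row and column `i` turns `W` into `X` with `X² = (M-1)X`, so
`I + S̄_(i) F̄ F̄ᴴ S̄_(i)ᵀ = ((1 + αNM)·I - αN·X) ⊗ I_N`, whose inverse `u·I + v·X` and its square
stay in the span of `I` and `X`. Padding back with zeros and summing over `i` gives `c₁·I + c₂·W`,
the `W` part annihilates `F̄`, and (ii) reduces to the scalar identity `μ = N·c₁`.
-/

noncomputable def expFrac (n : ℕ) (t : ℤ) : ℂ :=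
  Complex.exp (2 * Real.pi * Complex.I * t / n)

section expFrac

open Complex

lemma expFrac_add (n : ℕ) (s t : ℤ) : expFrac n (s + t) = expFrac n s * expFrac n t := by
  rw [expFrac, expFrac, expFrac, ← exp_add]; push_cast; ring_nf

lemma expFrac_mul_natCast (n : ℕ) (t : ℤ) (k : ℕ) : expFrac n (t * k) = expFrac n t ^ k := by
  rw [expFrac, expFrac, ← exp_nat_mul]; push_cast; ring_nf

lemma star_expFrac (n : ℕ) (t : ℤ) : star (expFrac n t) = expFrac n (-t) := by
  rw [expFrac, expFrac, Complex.star_def, ← exp_conj]; simp [map_div₀, conj_I, map_ofNat]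

lemma expFrac_mul_mul_right {a b : ℕ} (hb : b ≠ 0) (t : ℤ) :
    expFrac (a * b) (t * b) = expFrac a t := by
  rw [expFrac, expFrac]; push_cast; field_simp

lemma expFrac_eq_zpow (n : ℕ) (t : ℤ) : expFrac n t = exp (2 * Real.pi * I / n) ^ t := by
  rw [expFrac, ← exp_int_mul]; ring_nf

lemma expFrac_eq_one_iff {n : ℕ} (hn : n ≠ 0) (t : ℤ) : expFrac n t = 1 ↔ (n : ℤ) ∣ t := by
  rw [expFrac_eq_zpow, (isPrimitiveRoot_exp n hn).zpow_eq_one_iff_dvd]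

lemma sum_expFrac_mul {n : ℕ} (hn : n ≠ 0) (d : ℤ) :
    ∑ k : Fin n, expFrac n (d * k) = if (n : ℤ) ∣ d then (n : ℂ) else 0 := by
  simp_rw [expFrac_mul_natCast]
  rw [Fin.sum_univ_eq_sum_range (fun k => expFrac n d ^ k)]
  split_ifs with hd
  · simp [(expFrac_eq_one_iff hn d).2 hd]
  · have hpow : expFrac n d ^ n = 1 := by
      rw [← expFrac_mul_natCast, expFrac_eq_one_iff hn]; exact dvd_mul_left _ _
    rw [geom_sum_eq (mt (expFrac_eq_one_iff hn d).1 hd), hpow, sub_self, zero_div]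

lemma sum_expFrac_mul_add_mul {M N : ℕ} (hM : M ≠ 0) (hN : N ≠ 0) (d : ℤ) (m : ℕ) :
    ∑ n : Fin N, expFrac (N * M) (d * (m + n * M : ℕ)) =
      expFrac (N * M) (d * m) * if (N : ℤ) ∣ d then (N : ℂ) else 0 := by
  rw [← sum_expFrac_mul hN, Finset.mul_sum]
  refine Finset.sum_congr rfl fun n _ => ?_
  rw [← expFrac_mul_mul_right (a := N) hM, ← expFrac_add]
  push_cast; ring_nf

end expFrac

lemma Int.natCast_dvd_sub_iff_eq {n a b : ℕ} (ha : a < n) (hb : b < n) :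
    (n : ℤ) ∣ (b : ℤ) - a ↔ a = b :=
  ⟨fun h => (Nat.modEq_iff_dvd.2 h).eq_of_lt_of_lt ha hb, fun h => by simp [h]⟩

lemma Matrix.sum_kronecker {ι l m n p : Type*} (s : Finset ι) (A : ι → Matrix l m ℂ)
    (B : Matrix n p ℂ) : (∑ i ∈ s, A i) ⊗ₖ B = ∑ i ∈ s, A i ⊗ₖ B := by
  ext
  simp [Matrix.sum_apply, Finset.sum_mul]

lemma mul_self_eq_card_smul {ι : Type*} [Fintype ι] {W : Matrix ι ι ℂ}
    (hW : ∀ a i b, W a i * W i b = W a b) : W * W = (Fintype.card ι : ℂ) • W := by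
  ext a b
  simp [mul_apply, hW]

abbrev keptCol (M N m : ℕ) := {k : Fin (N * M) // ∀ n : Fin N, (k : ℕ) ≠ m + (n : ℕ) * M}

lemma add_mul_lt_mul {M N m : ℕ} (hm : m < M) (n : Fin N) : m + (n : ℕ) * M < N * M := by
  nlinarith [n.isLt]

lemma sum_keptCol_add_sum {M N m : ℕ} (hm : m < M) (g : Fin (N * M) → ℂ) :
    ∑ k : keptCol M N m, g k + ∑ n : Fin N, g ⟨m + n * M, add_mul_lt_mul hm n⟩ = ∑ k, g k := by
  rw [← Fintype.sum_subtype_add_sum_subtype fun k : Fin (N * M) => ∀ n : Fin N, (k : ℕ) ≠ m + n * M]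
  congr 1
  refine Fintype.sum_bijective (fun n => ⟨⟨m + n * M, add_mul_lt_mul hm n⟩, fun h => h n rfl⟩)
    ⟨fun n n' h => ?_, fun k => ?_⟩ _ _ fun _ => rfl
  · have : (n : ℕ) * M = n' * M := by simpa using h
    exact Fin.ext (Nat.eq_of_mul_eq_mul_right (by omega) this)
  · obtain ⟨n, hn⟩ := not_forall_not.1 k.2
    exact ⟨n, Subtype.ext (Fin.ext hn.symm)⟩

/-- The removed columns of the DFT matrix have Gram matrix `N·(W ⊗ I_N)` with this `W`. -/
noncomputable def phaseMatrix (M m : ℕ) : Matrix (Fin M) (Fin M) ℂ :=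
  of fun j j' => expFrac M (((j' : ℤ) - j) * m)

/-- `Q̄_m`, with row `l = jN + b` of the DFT matrix indexed by `(j, b)`. -/
noncomputable def puncturedDFT (M N m : ℕ) : Matrix (Fin M × Fin N) (keptCol M N m) ℂ :=
  of fun jb k => expFrac (N * M) (-(((jb.1 * N + jb.2 : ℕ) : ℤ) * (k : Fin (N * M))))

lemma rowIndex_lt {M N : ℕ} (jb : Fin M × Fin N) : (jb.1 : ℕ) * N + jb.2 < N * M := by
  nlinarith [jb.1.isLt, jb.2.isLt]

lemma rowIndex_inj {M N : ℕ} {jb jb' : Fin M × Fin N} :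
    (jb.1 : ℕ) * N + jb.2 = jb'.1 * N + jb'.2 ↔ jb = jb' := by
  have key (jb : Fin M × Fin N) : (jb.1 : ℕ) * N + jb.2 = (finProdFinEquiv jb : Fin (M * N)) := by
    simp [finProdFinEquiv, mul_comm, add_comm]
  rw [key, key, Fin.val_inj, finProdFinEquiv.injective.eq_iff]

lemma puncturedDFT_mul_conjTranspose_apply (M N m : ℕ) (jb jb' : Fin M × Fin N) :
    (puncturedDFT M N m * (puncturedDFT M N m)ᴴ) jb jb' =
      ∑ k : keptCol M N m, expFrac (N * M)
        ((((jb'.1 * N + jb'.2 : ℕ) : ℤ) - (jb.1 * N + jb.2 : ℕ)) * (k : Fin (N * M))) := by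
  rw [mul_apply]
  refine Fintype.sum_congr _ _ fun k => ?_
  simp only [conjTranspose_apply, puncturedDFT, of_apply, star_expFrac, ← expFrac_add]
  ring_nf

lemma puncturedDFT_mul_conjTranspose {M N m : ℕ} (hm : m < M) (hN : N ≠ 0) :
    puncturedDFT M N m * (puncturedDFT M N m)ᴴ =
      ((N * M : ℕ) : ℂ) • 1 - (N : ℂ) • (phaseMatrix M m ⊗ₖ (1 : Matrix (Fin N) (Fin N) ℂ)) := by
  ext ⟨j, b⟩ ⟨j', b'⟩
  set d : ℤ := ((j' * N + b' : ℕ) : ℤ) - (j * N + b : ℕ) with hd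
  have hNM : ((N * M : ℕ) : ℤ) ∣ d ↔ (j, b) = (j', b') :=
    (Int.natCast_dvd_sub_iff_eq (rowIndex_lt (j, b)) (rowIndex_lt (j', b'))).trans rowIndex_inj
  have hd' : d = ((j' : ℤ) - j) * N + ((b' : ℤ) - b) := by rw [hd]; push_cast; ring
  have hdN : (N : ℤ) ∣ d ↔ b = b' := by
    rw [hd', Int.dvd_add_right (dvd_mul_left _ _)]
    exact (Int.natCast_dvd_sub_iff_eq b.isLt b'.isLt).trans Fin.val_inj
  rw [puncturedDFT_mul_conjTranspose_apply, ← hd,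
    eq_sub_of_add_eq (sum_keptCol_add_sum hm fun k => expFrac (N * M) (d * (k : ℕ))),
    sum_expFrac_mul (Nat.mul_ne_zero hN (by omega)), sum_expFrac_mul_add_mul (by omega) hN]
  simp only [hNM, hdN, Matrix.sub_apply, Matrix.smul_apply, one_apply, kroneckerMap_apply,
    smul_eq_mul]
  by_cases hbb : b = b'
  · subst hbb
    have : expFrac (N * M) (d * m) = phaseMatrix M m j j' := by
      rw [phaseMatrix, of_apply, ← expFrac_mul_mul_right (a := M) hN, mul_comm N M, hd']
      ring_nf
    rw [this]
    by_cases hjj : j = j' <;> simp [hjj] <;> ring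
  · simp [hbb]

lemma phaseMatrix_mul_apply_mul (M m : ℕ) (a i b : Fin M) :
    phaseMatrix M m a i * phaseMatrix M m i b = phaseMatrix M m a b := by
  simp only [phaseMatrix, of_apply, ← expFrac_add]
  ring_nf

lemma phaseMatrix_apply_self (M m : ℕ) (i : Fin M) : phaseMatrix M m i i = 1 := by
  simp [phaseMatrix, expFrac]

lemma conjTranspose_phaseMatrix (M m : ℕ) : (phaseMatrix M m)ᴴ = phaseMatrix M m := by
  ext a b
  simp only [conjTranspose_apply, phaseMatrix, of_apply, star_expFrac]
  ring_nf

open scoped ComplexOrder in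
/-- `Y = (W ⊗ I_N) Q̄` has `Y Yᴴ = (W ⊗ I_N)(NM·I - N·(W ⊗ I_N))(W ⊗ I_N) = 0` as `W² = M·W`. -/
lemma phaseMatrix_kronecker_one_mul_puncturedDFT {M N m : ℕ} (hm : m < M) (hN : N ≠ 0) :
    (phaseMatrix M m ⊗ₖ (1 : Matrix (Fin N) (Fin N) ℂ)) * puncturedDFT M N m = 0 := by
  set X := phaseMatrix M m ⊗ₖ (1 : Matrix (Fin N) (Fin N) ℂ) with hX
  have hXX : X * X = (M : ℂ) • X := by
    rw [← mul_kronecker_mul, Matrix.one_mul, mul_self_eq_card_smul (phaseMatrix_mul_apply_mul M m),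
      Fintype.card_fin, smul_kronecker]
  have hXH : Xᴴ = X := by
    rw [conjTranspose_kronecker, conjTranspose_phaseMatrix, conjTranspose_one]
  rw [← self_mul_conjTranspose_eq_zero, conjTranspose_mul, hXH, Matrix.mul_assoc,
    ← Matrix.mul_assoc (puncturedDFT M N m), puncturedDFT_mul_conjTranspose hm hN, ← hX]
  simp only [Matrix.mul_sub, Matrix.sub_mul, Matrix.mul_smul, Matrix.smul_mul, Matrix.mul_one,
    ← Matrix.mul_assoc, hXX]
  push_cast
  module

lemma sqrt_smul_puncturedDFT_mul_conjTranspose {M N m : ℕ} (hm : m < M) (hN : N ≠ 0) {α : ℝ}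
    (hα : 0 ≤ α) :
    (((√α : ℝ) : ℂ) • puncturedDFT M N m) * (((√α : ℝ) : ℂ) • puncturedDFT M N m)ᴴ =
      (((α : ℂ) * (N * M : ℕ)) • 1 - ((α : ℂ) * N) • phaseMatrix M m) ⊗ₖ
        (1 : Matrix (Fin N) (Fin N) ℂ) := by
  have hsq : ((√α : ℝ) : ℂ) * star ((√α : ℝ) : ℂ) = α := by
    rw [Complex.star_def, Complex.conj_ofReal, ← Complex.ofReal_mul, Real.mul_self_sqrt hα]
  rw [conjTranspose_smul, Matrix.smul_mul, Matrix.mul_smul, smul_smul, hsq,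
    puncturedDFT_mul_conjTranspose hm hN]
  ext ⟨j, b⟩ ⟨j', b'⟩
  simp only [Matrix.smul_apply, Matrix.sub_apply, kroneckerMap_apply, one_apply, Prod.mk.injEq,
    smul_eq_mul, ite_and]
  split_ifs <;> push_cast <;> ring

/-- Row `j` of `I_{M,i}` is the standard basis row `e_{skipEmb i j}ᵀ`. -/
def skipEmb {M : ℕ} (i : Fin M) : Fin (M - 1) ↪ Fin M where
  toFun j := ⟨if (j : ℕ) < i then j else j + 1, by have := j.isLt; have := i.isLt; split <;> omega⟩
  inj' j j' h := by
    simp only [Fin.mk.injEq] at h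
    exact Fin.ext (by split_ifs at h <;> omega)

lemma skipEmb_val {M : ℕ} (i : Fin M) (j : Fin (M - 1)) :
    (skipEmb i j : ℕ) = if (j : ℕ) < i then (j : ℕ) else (j : ℕ) + 1 :=
  rfl

lemma skipEmb_ne {M : ℕ} (i : Fin M) (j : Fin (M - 1)) : skipEmb i j ≠ i := by
  intro h
  have := congrArg Fin.val h
  rw [skipEmb_val] at this
  split_ifs at this <;> omega

lemma map_univ_skipEmb {M : ℕ} (i : Fin M) :
    Finset.univ.map (skipEmb i) = Finset.univ.erase i :=
  Finset.eq_of_subset_of_card_le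
    (fun k hk => by obtain ⟨j, -, rfl⟩ := Finset.mem_map.1 hk; simp [skipEmb_ne])
    (by simp)

lemma sum_skipEmb {M : ℕ} (i : Fin M) (f : Fin M → ℂ) :
    ∑ j, f (skipEmb i j) = ∑ k ∈ Finset.univ.erase i, f k := by
  rw [← map_univ_skipEmb, Finset.sum_map]

noncomputable def complProj {ι : Type*} [DecidableEq ι] (i : ι) : Matrix ι ι ℂ :=
  diagonal fun k => if k = i then 0 else 1

lemma sum_complProj_mul_mul_complProj {ι : Type*} [Fintype ι] [DecidableEq ι]
    (B : Matrix ι ι ℂ) :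
    ∑ i, complProj i * B * complProj i = ((Fintype.card ι : ℂ) - 2) • B + diagonal B.diag := by
  ext k k'
  have hterm (i : ι) : (if k = i then (0 : ℂ) else 1) * (if k' = i then 0 else 1) =
      1 - (if k = i then 1 else 0) - (if k' = i then 1 else 0) +
        if k = i then (if k' = i then 1 else 0) else 0 := by
    split_ifs <;> norm_num
  have hcount : ∑ i, (if k = i then (0 : ℂ) else 1) * (if k' = i then 0 else 1) =
      (Fintype.card ι : ℂ) - 2 + if k' = k then 1 else 0 := by
    simp only [hterm, Finset.sum_add_distrib, Finset.sum_sub_distrib, Finset.sum_ite_eq,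
      Finset.mem_univ, if_true, Finset.sum_const, Finset.card_univ, nsmul_eq_mul, mul_one]
    ring
  simp only [complProj, Matrix.sum_apply, diagonal_mul, mul_diagonal, Matrix.add_apply,
    Matrix.smul_apply, diagonal_apply, diag_apply, smul_eq_mul]
  simp_rw [mul_right_comm _ (B k k'), ← Finset.sum_mul, hcount]
  by_cases hk : k = k'
  · subst hk; simp; ring
  · simp [hk, Ne.symm hk]

lemma submatrix_smul_one_add_smul {ι κ : Type*} [DecidableEq ι] [DecidableEq κ] (e : ι ↪ κ)
    (B : Matrix κ κ ℂ) (x y : ℂ) :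
    (x • 1 + y • B).submatrix e e = x • 1 + y • B.submatrix e e := by
  ext j j'
  simp [one_apply, e.injective.eq_iff]

section RowRemoved

variable {M : ℕ} (i : Fin M)

lemma rowRemoved_apply (j : Fin (M - 1)) (k : Fin M) :
    rowRemoved M i j k = if skipEmb i j = k then 1 else 0 := by
  simp only [rowRemoved, of_apply, Fin.ext_iff, skipEmb_val, eq_comm]

lemma rowRemoved_mul_mul_transpose (B : Matrix (Fin M) (Fin M) ℂ) :
    rowRemoved M i * B * (rowRemoved M i)ᵀ = B.submatrix (skipEmb i) (skipEmb i) := by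
  ext j j'
  simp [mul_apply, rowRemoved_apply]

lemma transpose_rowRemoved_mul_rowRemoved : (rowRemoved M i)ᵀ * rowRemoved M i = complProj i := by
  ext k k'
  have := sum_skipEmb i fun x => (if x = k then (1 : ℂ) else 0) * if x = k' then 1 else 0
  simp only [mul_apply, transpose_apply, rowRemoved_apply, this]
  by_cases hk : k = k' <;> simp [complProj, hk, eq_comm]

lemma transpose_rowRemoved_mul_submatrix_mul (B : Matrix (Fin M) (Fin M) ℂ) :
    (rowRemoved M i)ᵀ * B.submatrix (skipEmb i) (skipEmb i) * rowRemoved M i =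
      complProj i * B * complProj i := by
  rw [← rowRemoved_mul_mul_transpose, ← transpose_rowRemoved_mul_rowRemoved]
  simp only [Matrix.mul_assoc]

end RowRemoved

section SpanOneAndX

variable {K n : Type*} [Field K] [Fintype n] [DecidableEq n] {X : Matrix n n K} {s : K}

lemma inv_smul_one_sub_smul (hX : X * X = s • X) {p q : K} (hp : p ≠ 0) (hpq : p - q * s ≠ 0) :
    (p • 1 - q • X)⁻¹ = p⁻¹ • 1 + (q / (p * (p - q * s))) • X := by
  refine Matrix.inv_eq_right_inv ?_
  simp only [Matrix.sub_mul, Matrix.mul_add, Matrix.smul_mul, Matrix.mul_smul, Matrix.one_mul,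
    Matrix.mul_one, hX]
  match_scalars <;> field_simp
  ring

lemma smul_one_add_smul_mul_self (hX : X * X = s • X) (u v : K) :
    (u • 1 + v • X) * (u • 1 + v • X) = (u * u) • 1 + (2 * u * v + v * v * s) • X := by
  simp only [Matrix.add_mul, Matrix.mul_add, Matrix.smul_mul, Matrix.mul_smul, Matrix.one_mul,
    Matrix.mul_one, hX]
  module

end SpanOneAndX

section Compression

variable {M : ℕ} {W : Matrix (Fin M) (Fin M) ℂ}

lemma one_add_rowRemoved_mul_mul_transpose (i : Fin M) (a b : ℂ) :
    1 + rowRemoved M i * (a • 1 - b • W) * (rowRemoved M i)ᵀ =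
      (1 + a) • 1 - b • W.submatrix (skipEmb i) (skipEmb i) := by
  rw [rowRemoved_mul_mul_transpose, sub_eq_add_neg, ← neg_smul, submatrix_smul_one_add_smul]
  module

lemma submatrix_skipEmb_mul_self (hW : ∀ a i b, W a i * W i b = W a b) (i : Fin M) :
    W.submatrix (skipEmb i) (skipEmb i) * W.submatrix (skipEmb i) (skipEmb i) =
      ((M - 1 : ℕ) : ℂ) • W.submatrix (skipEmb i) (skipEmb i) := by
  rw [mul_self_eq_card_smul (W := W.submatrix _ _) fun _ _ _ => hW _ _ _, Fintype.card_fin]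

lemma sum_transpose_rowRemoved_mul_inv_sq_mul (hW : ∀ a i b, W a i * W i b = W a b)
    (hW1 : ∀ i, W i i = 1) {a b u v : ℂ} (ha : 1 + a ≠ 0) (hab : 1 + a - b * (M - 1 : ℕ) ≠ 0)
    (hu : u = (1 + a)⁻¹) (hv : v = b / ((1 + a) * (1 + a - b * (M - 1 : ℕ)))) :
    ∑ i, (rowRemoved M i)ᵀ *
        ((1 + rowRemoved M i * (a • 1 - b • W) * (rowRemoved M i)ᵀ)⁻¹ *
          (1 + rowRemoved M i * (a • 1 - b • W) * (rowRemoved M i)ᵀ)⁻¹) * rowRemoved M i =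
      (((M : ℂ) - 1) * u ^ 2 + (2 * u * v + v ^ 2 * (M - 1 : ℕ))) • 1 +
        ((M - 2 : ℂ) * (2 * u * v + v ^ 2 * (M - 1 : ℕ))) • W := by
  have hterm (i : Fin M) : (rowRemoved M i)ᵀ *
      ((1 + rowRemoved M i * (a • 1 - b • W) * (rowRemoved M i)ᵀ)⁻¹ *
        (1 + rowRemoved M i * (a • 1 - b • W) * (rowRemoved M i)ᵀ)⁻¹) * rowRemoved M i =
      complProj i * ((u * u) • 1 + (2 * u * v + v * v * (M - 1 : ℕ)) • W) * complProj i := by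
    have hX := submatrix_skipEmb_mul_self hW i
    rw [one_add_rowRemoved_mul_mul_transpose, inv_smul_one_sub_smul hX ha hab,
      smul_one_add_smul_mul_self hX, ← hu, ← hv, ← submatrix_smul_one_add_smul,
      transpose_rowRemoved_mul_submatrix_mul]
  have hdiag (x y : ℂ) : diagonal (x • 1 + y • W).diag = (x + y) • 1 := by
    ext k k'
    by_cases h : k = k' <;> simp [h, hW1]
  rw [Finset.sum_congr rfl fun i _ => hterm i, sum_complProj_mul_mul_complProj, Fintype.card_fin,
    hdiag]
  module

end Compression

section Selection

variable {M N : ℕ}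

lemma sSel_mul_apply {n : Type*} [Fintype n] (i : Fin M) (X : Matrix (Fin M × Fin N) n ℂ)
    (b : Fin N) (c : n) : (sSel M N i * X) b c = X (i, b) c := by
  rw [mul_apply, Finset.sum_eq_single (i, b)] <;> aesop (add simp sSel)

lemma mul_transpose_sSel_apply {n : Type*} [Fintype n] (i : Fin M)
    (X : Matrix n (Fin M × Fin N) ℂ) (c : n) (b : Fin N) :
    (X * (sSel M N i)ᵀ) c b = X c (i, b) := by
  rw [← transpose_apply (X * _), transpose_mul, transpose_transpose, sSel_mul_apply,
    transpose_apply]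

lemma trace_sSel_mul_kronecker_one_mul_transpose (i : Fin M) (A : Matrix (Fin M) (Fin M) ℂ) :
    (sSel M N i * (A ⊗ₖ (1 : Matrix (Fin N) (Fin N) ℂ)) * (sSel M N i)ᵀ).trace = N * A i i := by
  simp [trace, Matrix.mul_assoc, sSel_mul_apply, mul_transpose_sSel_apply]

lemma sum_transpose_sSel_mul_sSel : ∑ i, (sSel M N i)ᵀ * sSel M N i = 1 := by
  ext ⟨j, c⟩ ⟨j', c'⟩
  simp [Matrix.sum_apply, mul_apply, sSel, one_apply, ite_and, Prod.ext_iff]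

lemma transpose_sBar (i : Fin M) :
    (sBar M N i)ᵀ = (rowRemoved M i)ᵀ ⊗ₖ (1 : Matrix (Fin N) (Fin N) ℂ) := by
  rw [sBar, ← kroneckerMap_transpose, transpose_one]

variable {n : Type*} [Fintype n] {F : Matrix (Fin M × Fin N) n ℂ}

lemma sum_transpose_sBar_mul_inv_sq_mul {G : Matrix (Fin M) (Fin M) ℂ}
    (hF : F * Fᴴ = G ⊗ₖ (1 : Matrix (Fin N) (Fin N) ℂ)) :
    ∑ i, (sBar M N i)ᵀ *
        ((1 + sBar M N i * F * Fᴴ * (sBar M N i)ᵀ)⁻¹ *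
          (1 + sBar M N i * F * Fᴴ * (sBar M N i)ᵀ)⁻¹) * sBar M N i * F =
      ((∑ i, (rowRemoved M i)ᵀ *
          ((1 + rowRemoved M i * G * (rowRemoved M i)ᵀ)⁻¹ *
            (1 + rowRemoved M i * G * (rowRemoved M i)ᵀ)⁻¹) * rowRemoved M i) ⊗ₖ
        (1 : Matrix (Fin N) (Fin N) ℂ)) * F := by
  have hY (i : Fin M) : 1 + sBar M N i * F * Fᴴ * (sBar M N i)ᵀ =
      (1 + rowRemoved M i * G * (rowRemoved M i)ᵀ) ⊗ₖ (1 : Matrix (Fin N) (Fin N) ℂ) := by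
    rw [Matrix.mul_assoc (sBar M N i), hF, transpose_sBar, sBar, ← mul_kronecker_mul,
      ← mul_kronecker_mul, Matrix.one_mul, Matrix.one_mul, add_kronecker, one_kronecker_one]
  rw [Matrix.sum_kronecker, Matrix.sum_mul]
  refine Finset.sum_congr rfl fun i _ => ?_
  rw [hY, inv_kronecker, inv_one, transpose_sBar, sBar, ← mul_kronecker_mul, ← mul_kronecker_mul,
    ← mul_kronecker_mul, Matrix.one_mul, Matrix.one_mul, Matrix.one_mul]

lemma sum_transpose_sBar_mul_inv_sq_mul_eq_smul {W : Matrix (Fin M) (Fin M) ℂ}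
    (hW : ∀ a i b, W a i * W i b = W a b) (hW1 : ∀ i, W i i = 1) {a b u v : ℂ} (ha : 1 + a ≠ 0)
    (hab : 1 + a - b * (M - 1 : ℕ) ≠ 0) (hu : u = (1 + a)⁻¹)
    (hv : v = b / ((1 + a) * (1 + a - b * (M - 1 : ℕ))))
    (hF : F * Fᴴ = (a • 1 - b • W) ⊗ₖ (1 : Matrix (Fin N) (Fin N) ℂ))
    (hWF : (W ⊗ₖ (1 : Matrix (Fin N) (Fin N) ℂ)) * F = 0) :
    ∑ i, (sBar M N i)ᵀ *
        ((1 + sBar M N i * F * Fᴴ * (sBar M N i)ᵀ)⁻¹ *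
          (1 + sBar M N i * F * Fᴴ * (sBar M N i)ᵀ)⁻¹) * sBar M N i * F =
      (((M : ℂ) - 1) * u ^ 2 + (2 * u * v + v ^ 2 * (M - 1 : ℕ))) • F := by
  rw [sum_transpose_sBar_mul_inv_sq_mul hF,
    sum_transpose_rowRemoved_mul_inv_sq_mul hW hW1 ha hab hu hv, add_kronecker, smul_kronecker,
    smul_kronecker, one_kronecker_one, Matrix.add_mul, Matrix.smul_mul, Matrix.smul_mul, hWF,
    smul_zero, add_zero, Matrix.one_mul]

end Selection

/-- Theorem 1, KKT conditions: with `α = KP/(N²(M−1))` and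
`F̄ = √α·Q̄_m`, (i) `Tr(S_i F̄ F̄ᴴ S_iᵀ) = KP` for every `i`, and (ii) with
`μ = N(M−1+β)/(1+NMα)² > 0`, `β = (2Nα(1+Nα)+N²α²(M−1))/(1+Nα)²`, one has
`−2N·Σ_i S̄_(i)ᵀ (I + S̄_(i) F̄ F̄ᴴ S̄_(i)ᵀ)⁻² S̄_(i) F̄ + 2μ·Σ_i S_iᵀ S_i F̄ = 0`. -/
theorem stmt_5 (M N : ℕ) (hM : 2 ≤ M) (hN : 1 ≤ N) (m : ℕ) (hm : m ≤ M - 1)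
    (K P : ℝ) (hK : 0 < K) (hP : 0 < P)
    (α : ℝ) (hα : α = K * P / ((N : ℝ) ^ 2 * ((M : ℝ) - 1)))
    (Qbar : Matrix (Fin M × Fin N)
      {k : Fin (N * M) // ∀ n : Fin N, (k : ℕ) ≠ m + (n : ℕ) * M} ℂ)
    (hQbar : ∀ (j : Fin M) (b : Fin N)
        (k : {k : Fin (N * M) // ∀ n : Fin N, (k : ℕ) ≠ m + (n : ℕ) * M}),
      Qbar (j, b) k =
        Complex.exp (-(2 * (Real.pi : ℂ) * Complex.I *
          ((((j : ℕ) * N + (b : ℕ)) * ((k : Fin (N * M)) : ℕ) : ℕ) : ℂ)) / ((N * M : ℕ) : ℂ)))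
    (F : Matrix (Fin M × Fin N)
      {k : Fin (N * M) // ∀ n : Fin N, (k : ℕ) ≠ m + (n : ℕ) * M} ℂ)
    (hF : F = ((Real.sqrt α : ℝ) : ℂ) • Qbar)
    (β : ℝ)
    (hβ : β = (2 * N * α * (1 + N * α) + (N : ℝ) ^ 2 * α ^ 2 * ((M : ℝ) - 1)) /
      (1 + (N : ℝ) * α) ^ 2)
    (μ : ℝ)
    (hμ : μ = (N : ℝ) * ((M : ℝ) - 1 + β) / (1 + (N : ℝ) * (M : ℝ) * α) ^ 2) :
    (∀ i : Fin M,
        (sSel M N i * F * Fᴴ * (sSel M N i)ᵀ).trace = ((K * P : ℝ) : ℂ)) ∧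
      0 < μ ∧
      (-(2 * (N : ℂ))) •
          (∑ i : Fin M,
            (sBar M N i)ᵀ *
              (((1 : Matrix (Fin (M - 1) × Fin N) (Fin (M - 1) × Fin N) ℂ) +
                  sBar M N i * F * Fᴴ * (sBar M N i)ᵀ)⁻¹ *
                ((1 : Matrix (Fin (M - 1) × Fin N) (Fin (M - 1) × Fin N) ℂ) +
                  sBar M N i * F * Fᴴ * (sBar M N i)ᵀ)⁻¹) * sBar M N i * F) +
        ((2 * μ : ℝ) : ℂ) • (∑ i : Fin M, (sSel M N i)ᵀ * sSel M N i * F) = 0 := by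
  have hNR : (0 : ℝ) < N := by exact_mod_cast hN
  have hMR : (2 : ℝ) ≤ M := by exact_mod_cast hM
  have hM1 : (0 : ℝ) < M - 1 := by linarith
  have hα0 : 0 < α := by rw [hα]; positivity
  have hM1C : ((M - 1 : ℕ) : ℂ) = (M : ℂ) - 1 := by rw [Nat.cast_sub (by omega), Nat.cast_one]
  have hp : (1 + α * (N * M) : ℂ) ≠ 0 := by
    exact_mod_cast (by positivity : (0 : ℝ) < 1 + α * (N * M)).ne'
  have hq : (1 + α * N : ℂ) ≠ 0 := by exact_mod_cast (by positivity : (0 : ℝ) < 1 + α * N).ne'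
  obtain rfl : Qbar = puncturedDFT M N m := by
    ext ⟨j, b⟩ k
    rw [hQbar, puncturedDFT, of_apply, expFrac]
    push_cast
    ring_nf
  have hFF := hF ▸ sqrt_smul_puncturedDFT_mul_conjTranspose (by omega) (by omega) hα0.le
  have hWF : (phaseMatrix M m ⊗ₖ (1 : Matrix (Fin N) (Fin N) ℂ)) * F = 0 := by
    rw [hF, Matrix.mul_smul, phaseMatrix_kronecker_one_mul_puncturedDFT (by omega) (by omega),
      smul_zero]
  refine ⟨fun i => ?_, by rw [hμ, hβ]; positivity, ?_⟩
  · rw [Matrix.mul_assoc _ F, hFF, trace_sSel_mul_kronecker_one_mul_transpose]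
    simp only [Matrix.smul_apply, Matrix.sub_apply, one_apply_eq, phaseMatrix_apply_self,
      smul_eq_mul, mul_one]
    exact_mod_cast (by rw [hα]; field_simp : (N : ℝ) * (α * (N * M) - α * N) = K * P)
  · rw [sum_transpose_sBar_mul_inv_sq_mul_eq_smul (phaseMatrix_mul_apply_mul M m)
      (phaseMatrix_apply_self M m) (by push_cast; exact hp)
      (by rw [hM1C]; push_cast; ring_nf; exact hq) rfl rfl hFF hWF, ← Matrix.sum_mul,
      sum_transpose_sSel_mul_sSel, Matrix.one_mul, smul_smul, ← add_smul]
    convert zero_smul ℂ F using 2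
    -- `β / (1 + NMα)²` is the coefficient `2uv + v²(M - 1)` of `X` in `(u·I + v·X)²`.
    rw [hμ, hβ, hM1C]
    push_cast
    field_simp
    ring
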